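/- arXiv:2603.23060 — 6 statements merged into one kernel-verified Lean document; each statement's English description precedes it below -/
import Mathlib

section
/- Let m₁, m₂ ≥ 1 and let K₁₁, K₁₂, K₂₁, K₂₂ be smooth functions on ℝ³, with coordinates written (x, τ, σ), taking values in the complex matrices of sizes m₁×m₁, m₁×m₂, m₂×m₁, m₂×m₂ respectively. Let K be the (m₁+m₂)×(m₁+m₂) block matrix [[K₁₁, K₁₂],[K₂₁, K₂₂]] and let E := (1/(m₁+m₂))·diag(m₂·I_{m₁}, −m₁·I_{m₂}). Assume at every point: (i) ∂_x∂_τ K = [∂_σ K, E] + [∂_τ K, [K, E]]; (ii) ∂_x K₁₁ = K₁₂K₂₁ and ∂_x K₂₂ = −K₂₁K₁₂. Then R := K₂₁, Q := −K₁₂, Φ := −K₁₁, Ψ := K₂₂ satisfy ∂_xΦ = QR, ∂_xΨ = RQ, and the matrix AKNS recursion step ∂_σ R = ∂_x∂_τ R − R·(∂_τΦ) − (∂_τΨ)·R and ∂_σ Q = −∂_x∂_τ Q + (∂_τΦ)·Q + Q·(∂_τΨ). -/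
noncomputable section

/-- Entrywise partial derivative in the first coordinate `x` of `ℝ³ = (x, τ, σ)`. -/
def pdx {a b : Type*} (f : ℝ × ℝ × ℝ → Matrix a b ℂ) (p : ℝ × ℝ × ℝ) : Matrix a b ℂ :=
  Matrix.of fun i j => deriv (fun s => f (s, p.2.1, p.2.2) i j) p.1

/-- Entrywise partial derivative in the second coordinate `τ`. -/
def pdτ {a b : Type*} (f : ℝ × ℝ × ℝ → Matrix a b ℂ) (p : ℝ × ℝ × ℝ) : Matrix a b ℂ :=
  Matrix.of fun i j => deriv (fun s => f (p.1, s, p.2.2) i j) p.2.1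

/-- Entrywise partial derivative in the third coordinate `σ`. -/
def pdσ {a b : Type*} (f : ℝ × ℝ × ℝ → Matrix a b ℂ) (p : ℝ × ℝ × ℝ) : Matrix a b ℂ :=
  Matrix.of fun i j => deriv (fun s => f (p.1, p.2.1, s) i j) p.2.2

private lemma pdx_neg' {a b : Type*} (f : ℝ × ℝ × ℝ → Matrix a b ℂ) (p : ℝ × ℝ × ℝ) :
    pdx (fun q => -f q) p = -(pdx f p) := by
  ext i j
  simp only [pdx, Matrix.of_apply, Matrix.neg_apply]
  rw [← deriv.fun_neg]

private lemma pdτ_neg' {a b : Type*} (f : ℝ × ℝ × ℝ → Matrix a b ℂ) (p : ℝ × ℝ × ℝ) :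
    pdτ (fun q => -f q) p = -(pdτ f p) := by
  ext i j
  simp only [pdτ, Matrix.of_apply, Matrix.neg_apply]
  rw [← deriv.fun_neg]

private lemma pdσ_neg' {a b : Type*} (f : ℝ × ℝ × ℝ → Matrix a b ℂ) (p : ℝ × ℝ × ℝ) :
    pdσ (fun q => -f q) p = -(pdσ f p) := by
  ext i j
  simp only [pdσ, Matrix.of_apply, Matrix.neg_apply]
  rw [← deriv.fun_neg]

private lemma pdx_fromBlocks {a b c d : Type*}
    (A : ℝ × ℝ × ℝ → Matrix a b ℂ) (B : ℝ × ℝ × ℝ → Matrix a c ℂ)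
    (C : ℝ × ℝ × ℝ → Matrix d b ℂ) (D : ℝ × ℝ × ℝ → Matrix d c ℂ) (p : ℝ × ℝ × ℝ) :
    pdx (fun q => Matrix.fromBlocks (A q) (B q) (C q) (D q)) p =
      Matrix.fromBlocks (pdx A p) (pdx B p) (pdx C p) (pdx D p) := by
  ext (i | i) (j | j) <;> simp [pdx]

private lemma pdτ_fromBlocks {a b c d : Type*}
    (A : ℝ × ℝ × ℝ → Matrix a b ℂ) (B : ℝ × ℝ × ℝ → Matrix a c ℂ)
    (C : ℝ × ℝ × ℝ → Matrix d b ℂ) (D : ℝ × ℝ × ℝ → Matrix d c ℂ) (p : ℝ × ℝ × ℝ) :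
    pdτ (fun q => Matrix.fromBlocks (A q) (B q) (C q) (D q)) p =
      Matrix.fromBlocks (pdτ A p) (pdτ B p) (pdτ C p) (pdτ D p) := by
  ext (i | i) (j | j) <;> simp [pdτ]

private lemma pdσ_fromBlocks {a b c d : Type*}
    (A : ℝ × ℝ × ℝ → Matrix a b ℂ) (B : ℝ × ℝ × ℝ → Matrix a c ℂ)
    (C : ℝ × ℝ × ℝ → Matrix d b ℂ) (D : ℝ × ℝ × ℝ → Matrix d c ℂ) (p : ℝ × ℝ × ℝ) :
    pdσ (fun q => Matrix.fromBlocks (A q) (B q) (C q) (D q)) p =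
      Matrix.fromBlocks (pdσ A p) (pdσ B p) (pdσ C p) (pdσ D p) := by
  ext (i | i) (j | j) <;> simp [pdσ]

private lemma fromBlocks_sub' {a b c d : Type*}
    (A A' : Matrix a b ℂ) (B B' : Matrix a c ℂ) (C C' : Matrix d b ℂ) (D D' : Matrix d c ℂ) :
    Matrix.fromBlocks A B C D - Matrix.fromBlocks A' B' C' D' =
      Matrix.fromBlocks (A - A') (B - B') (C - C') (D - D') := by
  ext (i | i) (j | j) <;> simp

/-- **Reduction of the ASDYM `K`-matrix equation to the matrix AKNS recursion step.**
With `K = [[K₁₁,K₁₂],[K₂₁,K₂₂]]` and `E = (1/(m₁+m₂))·diag(m₂·I, −m₁·I)`, if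
`∂_x∂_τ K = [∂_σ K, E] + [∂_τ K, [K,E]]`, `∂_x K₁₁ = K₁₂K₂₁` and `∂_x K₂₂ = −K₂₁K₁₂`,
then `R = K₂₁`, `Q = −K₁₂`, `Φ = −K₁₁`, `Ψ = K₂₂` satisfy `∂_xΦ = QR`, `∂_xΨ = RQ`,
`∂_σ R = ∂_x∂_τ R − R(∂_τΦ) − (∂_τΨ)R` and `∂_σ Q = −∂_x∂_τ Q + (∂_τΦ)Q + Q(∂_τΨ)`. -/
theorem asdym_reduction_matrix_AKNS (m₁ m₂ : ℕ) (hm₁ : 1 ≤ m₁) (hm₂ : 1 ≤ m₂)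
    (K₁₁ : ℝ × ℝ × ℝ → Matrix (Fin m₁) (Fin m₁) ℂ)
    (K₁₂ : ℝ × ℝ × ℝ → Matrix (Fin m₁) (Fin m₂) ℂ)
    (K₂₁ : ℝ × ℝ × ℝ → Matrix (Fin m₂) (Fin m₁) ℂ)
    (K₂₂ : ℝ × ℝ × ℝ → Matrix (Fin m₂) (Fin m₂) ℂ)
    (h11s : ∀ i j, ContDiff ℝ (⊤ : ℕ∞) fun p => K₁₁ p i j)
    (h12s : ∀ i j, ContDiff ℝ (⊤ : ℕ∞) fun p => K₁₂ p i j)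
    (h21s : ∀ i j, ContDiff ℝ (⊤ : ℕ∞) fun p => K₂₁ p i j)
    (h22s : ∀ i j, ContDiff ℝ (⊤ : ℕ∞) fun p => K₂₂ p i j)
    (K : ℝ × ℝ × ℝ → Matrix (Fin m₁ ⊕ Fin m₂) (Fin m₁ ⊕ Fin m₂) ℂ)
    (hK : ∀ p, K p = Matrix.fromBlocks (K₁₁ p) (K₁₂ p) (K₂₁ p) (K₂₂ p))
    (E : Matrix (Fin m₁ ⊕ Fin m₂) (Fin m₁ ⊕ Fin m₂) ℂ)
    (hE : E = ((m₁ + m₂ : ℂ))⁻¹ •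
      Matrix.fromBlocks ((m₂ : ℂ) • (1 : Matrix (Fin m₁) (Fin m₁) ℂ)) 0 0
        (-((m₁ : ℂ) • (1 : Matrix (Fin m₂) (Fin m₂) ℂ))))
    (hi : ∀ p, pdx (fun q => pdτ K q) p =
      (pdσ K p * E - E * pdσ K p) +
        (pdτ K p * (K p * E - E * K p) - (K p * E - E * K p) * pdτ K p))
    (hii1 : ∀ p, pdx K₁₁ p = K₁₂ p * K₂₁ p)
    (hii2 : ∀ p, pdx K₂₂ p = -(K₂₁ p * K₁₂ p)) :
    (∀ p, pdx (fun q => -K₁₁ q) p = (-K₁₂ p) * K₂₁ p) ∧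
    (∀ p, pdx K₂₂ p = K₂₁ p * (-K₁₂ p)) ∧
    (∀ p, pdσ K₂₁ p = pdx (fun q => pdτ K₂₁ q) p
        - K₂₁ p * pdτ (fun q => -K₁₁ q) p - pdτ K₂₂ p * K₂₁ p) ∧
    (∀ p, pdσ (fun q => -K₁₂ q) p = -(pdx (fun q => pdτ (fun q' => -K₁₂ q') q) p)
        + pdτ (fun q => -K₁₁ q) p * (-K₁₂ p) + (-K₁₂ p) * pdτ K₂₂ p) := by
  have hKfun : K = fun q => Matrix.fromBlocks (K₁₁ q) (K₁₂ q) (K₂₁ q) (K₂₂ q) := funext hK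
  subst hKfun
  set c : ℂ := ((m₁ + m₂ : ℂ))⁻¹ with hc
  have hsum : (m₁ + m₂ : ℂ) ≠ 0 := by
    have h0 : m₁ + m₂ ≠ 0 := by omega
    exact_mod_cast Nat.cast_ne_zero.mpr h0
  have he : c * (m₂ : ℂ) - (-(c * (m₁ : ℂ))) = 1 := by
    rw [hc]; field_simp; ring
  have hE' : E = Matrix.fromBlocks ((c * m₂) • (1 : Matrix (Fin m₁) (Fin m₁) ℂ)) 0 0
      ((-(c * m₁)) • (1 : Matrix (Fin m₂) (Fin m₂) ℂ)) := by
    rw [hE, Matrix.fromBlocks_smul]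
    congr 1 <;> simp [smul_smul, hc]
  -- commutator with E of a block matrix
  have hcomm : ∀ (A : Matrix (Fin m₁) (Fin m₁) ℂ) (B : Matrix (Fin m₁) (Fin m₂) ℂ)
      (C : Matrix (Fin m₂) (Fin m₁) ℂ) (D : Matrix (Fin m₂) (Fin m₂) ℂ),
      Matrix.fromBlocks A B C D * E - E * Matrix.fromBlocks A B C D =
        Matrix.fromBlocks 0 (-B) C 0 := by
    intro A B C D
    rw [hE', Matrix.fromBlocks_multiply, Matrix.fromBlocks_multiply]
    ext (i | i) (j | j) <;>
      simp only [Matrix.mul_zero, Matrix.zero_mul, add_zero, zero_add, Matrix.mul_smul,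
        Matrix.smul_mul, Matrix.mul_one, Matrix.one_mul, Matrix.fromBlocks_apply₁₁,
        Matrix.fromBlocks_apply₁₂, Matrix.fromBlocks_apply₂₁, Matrix.fromBlocks_apply₂₂,
        Matrix.sub_apply, Matrix.smul_apply, Matrix.neg_apply, Matrix.zero_apply,
        smul_eq_mul]
    · ring
    · linear_combination (-(B i j)) * he
    · linear_combination (C i j) * he
    · ring
  -- block decomposition of the main equation
  have key : ∀ p, pdx (fun q => pdτ K₂₁ q) p =
        pdσ K₂₁ p + (pdτ K₂₂ p * K₂₁ p - K₂₁ p * pdτ K₁₁ p) ∧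
      pdx (fun q => pdτ K₁₂ q) p =
        -(pdσ K₁₂ p) + (-(pdτ K₁₁ p * K₁₂ p) + K₁₂ p * pdτ K₂₂ p) := by
    intro p
    have h := hi p
    rw [show (fun q => pdτ (fun q' => Matrix.fromBlocks (K₁₁ q') (K₁₂ q') (K₂₁ q') (K₂₂ q')) q)
        = fun q => Matrix.fromBlocks (pdτ K₁₁ q) (pdτ K₁₂ q) (pdτ K₂₁ q) (pdτ K₂₂ q) from
      funext fun q => pdτ_fromBlocks K₁₁ K₁₂ K₂₁ K₂₂ q, pdx_fromBlocks,
      pdσ_fromBlocks, pdτ_fromBlocks, hcomm, hcomm,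
      Matrix.fromBlocks_multiply, Matrix.fromBlocks_multiply,
      fromBlocks_sub', Matrix.fromBlocks_add] at h
    obtain ⟨e11, e12, e21, e22⟩ := Matrix.fromBlocks_inj.mp h
    constructor
    · rw [e21]
      simp only [Matrix.mul_zero, Matrix.zero_mul, add_zero, zero_add]
    · rw [e12]
      simp only [Matrix.mul_zero, Matrix.zero_mul, add_zero, zero_add, Matrix.mul_neg,
        Matrix.neg_mul, sub_neg_eq_add]
  refine ⟨fun p => ?_, fun p => ?_, fun p => ?_, fun p => ?_⟩
  · rw [pdx_neg', hii1, Matrix.neg_mul]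
  · rw [hii2, Matrix.mul_neg]
  · rw [pdτ_neg', (key p).1]
    simp only [Matrix.mul_neg, Matrix.neg_mul]
    abel
  · rw [pdσ_neg', pdτ_neg',
      show (fun q => pdτ (fun q' => -K₁₂ q') q) = fun q => -(pdτ K₁₂ q) from
        funext fun q => pdτ_neg' K₁₂ q,
      pdx_neg', (key p).2]
    simp only [Matrix.mul_neg, Matrix.neg_mul, neg_neg, neg_add, neg_sub, sub_neg_eq_add]
    abel

end
end

section
/- Let m₁, m₂ ≥ 1 and let J₁₁, J₂₁, K₁₂, K₂₁ be differentiable functions of one real variable x taking values in the complex matrices of sizes m₁×m₁, m₂×m₁, m₁×m₂, m₂×m₁ respectively, with J₁₁(x) invertible for every x. Assume ∂_x J₁₁ = K₁₂J₂₁ and ∂_x J₂₁ = −K₂₁J₁₁ at every point. Then P := J₂₁·J₁₁⁻¹ satisfies ∂_x P = −K₂₁ − P·K₁₂·P; equivalently, with R := K₂₁ and Q := −K₁₂, the Miura-type relation ∂_x P = −R + PQP holds. -/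
/-! Differentiating `P = J₂₁ J₁₁⁻¹` by the product rule together with
`(J⁻¹)' = -J⁻¹ J' J⁻¹` gives `P' = J₂₁' J₁₁⁻¹ - P J₁₁' J₁₁⁻¹`, and the two flow equations turn this
into `-K₂₁ - P K₁₂ P`. The inverse is differentiable because of Cramer's rule `J⁻¹ = det⁻¹ • adj`. -/

noncomputable section

/-- Entrywise derivative of a matrix-valued function of one real variable. -/
def dM {a b : Type*} (f : ℝ → Matrix a b ℂ) (x : ℝ) : Matrix a b ℂ :=
  Matrix.of fun i j => deriv (fun s => f s i j) x

open Filter Topology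

section MatrixCalculus

variable {l m n : Type*} {x : ℝ}

theorem dM_const (A : Matrix m n ℂ) : dM (fun _ => A) x = 0 := by
  ext i j
  simp [dM]

theorem Filter.EventuallyEq.dM_eq {f g : ℝ → Matrix m n ℂ} (h : f =ᶠ[𝓝 x] g) :
    dM f x = dM g x := by
  ext i j
  exact Filter.EventuallyEq.deriv_eq (h.mono fun s hs => congrFun₂ hs i j)

theorem hasDerivAt_matrix_mul_apply [Fintype m] {f : ℝ → Matrix l m ℂ} {g : ℝ → Matrix m n ℂ}
    (hf : ∀ i j, DifferentiableAt ℝ (fun s => f s i j) x)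
    (hg : ∀ i j, DifferentiableAt ℝ (fun s => g s i j) x) (i : l) (j : n) :
    HasDerivAt (fun s => (f s * g s) i j) ((dM f x * g x + f x * dM g x) i j) x := by
  simp only [Matrix.mul_apply, Matrix.add_apply, dM, Matrix.of_apply, ← Finset.sum_add_distrib]
  exact HasDerivAt.fun_sum fun k _ => (hf i k).hasDerivAt.mul (hg k j).hasDerivAt

theorem dM_mul [Fintype m] {f : ℝ → Matrix l m ℂ} {g : ℝ → Matrix m n ℂ}
    (hf : ∀ i j, DifferentiableAt ℝ (fun s => f s i j) x)
    (hg : ∀ i j, DifferentiableAt ℝ (fun s => g s i j) x) :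
    dM (fun s => f s * g s) x = dM f x * g x + f x * dM g x := by
  ext i j
  exact (hasDerivAt_matrix_mul_apply hf hg i j).deriv

variable [Fintype n] [DecidableEq n]

theorem differentiableAt_det {J : ℝ → Matrix n n ℂ}
    (hJ : ∀ i j, DifferentiableAt ℝ (fun s => J s i j) x) :
    DifferentiableAt ℝ (fun s => (J s).det) x := by
  simp only [Matrix.det_apply']
  exact DifferentiableAt.fun_sum fun σ _ =>
    (DifferentiableAt.fun_finsetProd fun i _ => hJ (σ i) i).const_mul _

theorem differentiableAt_adjugate_apply {J : ℝ → Matrix n n ℂ}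
    (hJ : ∀ i j, DifferentiableAt ℝ (fun s => J s i j) x) (i j : n) :
    DifferentiableAt ℝ (fun s => (J s).adjugate i j) x := by
  simp only [Matrix.adjugate_apply]
  refine differentiableAt_det fun a b => ?_
  rcases eq_or_ne a j with rfl | h
  · simp
  · simpa [h] using hJ a b

theorem differentiableAt_inv_apply {J : ℝ → Matrix n n ℂ}
    (hJ : ∀ i j, DifferentiableAt ℝ (fun s => J s i j) x) (hu : IsUnit (J x).det) (i j : n) :
    DifferentiableAt ℝ (fun s => (J s)⁻¹ i j) x := by
  simp only [Matrix.inv_def, Matrix.smul_apply, Ring.inverse_eq_inv', smul_eq_mul]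
  exact ((differentiableAt_det hJ).inv hu.ne_zero).mul
    (differentiableAt_adjugate_apply hJ i j)

theorem eventually_isUnit_det {J : ℝ → Matrix n n ℂ}
    (hJ : ∀ i j, DifferentiableAt ℝ (fun s => J s i j) x) (hu : IsUnit (J x).det) :
    ∀ᶠ s in 𝓝 x, IsUnit (J s).det :=
  ((differentiableAt_det hJ).continuousAt.eventually_ne hu.ne_zero).mono fun _ hs => hs.isUnit

theorem dM_inv {J : ℝ → Matrix n n ℂ}
    (hJ : ∀ i j, DifferentiableAt ℝ (fun s => J s i j) x) (hu : IsUnit (J x).det) :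
    dM (fun s => (J s)⁻¹) x = -((J x)⁻¹ * dM J x * (J x)⁻¹) := by
  have hconst : (fun s => (J s)⁻¹ * J s) =ᶠ[𝓝 x] fun _ => 1 :=
    (eventually_isUnit_det hJ hu).mono fun s hs => Matrix.nonsing_inv_mul _ hs
  have hsum := hconst.dM_eq
  rw [dM_const, dM_mul (differentiableAt_inv_apply hJ hu) hJ] at hsum
  calc dM (fun s => (J s)⁻¹) x
      = dM (fun s => (J s)⁻¹) x * J x * (J x)⁻¹ := by
        rw [Matrix.mul_assoc, Matrix.mul_nonsing_inv _ hu, Matrix.mul_one]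
    _ = -((J x)⁻¹ * dM J x * (J x)⁻¹) := by
        rw [eq_neg_of_add_eq_zero_left hsum, Matrix.neg_mul]

end MatrixCalculus

theorem asdym_miura_relation_general (m₁ m₂ : ℕ)
    (J₁₁ : ℝ → Matrix (Fin m₁) (Fin m₁) ℂ)
    (J₂₁ : ℝ → Matrix (Fin m₂) (Fin m₁) ℂ)
    (K₁₂ : ℝ → Matrix (Fin m₁) (Fin m₂) ℂ)
    (K₂₁ : ℝ → Matrix (Fin m₂) (Fin m₁) ℂ)
    (hJ₁₁d : ∀ i j, Differentiable ℝ fun x => J₁₁ x i j)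
    (hJ₂₁d : ∀ i j, Differentiable ℝ fun x => J₂₁ x i j)
    (hJinv : ∀ x, IsUnit (J₁₁ x))
    (h1 : ∀ x, dM J₁₁ x = K₁₂ x * J₂₁ x)
    (h2 : ∀ x, dM J₂₁ x = -(K₂₁ x * J₁₁ x)) :
    (∀ x, dM (fun s => J₂₁ s * (J₁₁ s)⁻¹) x =
      -K₂₁ x - (J₂₁ x * (J₁₁ x)⁻¹) * K₁₂ x * (J₂₁ x * (J₁₁ x)⁻¹)) ∧
    (∀ x, dM (fun s => J₂₁ s * (J₁₁ s)⁻¹) x =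
      -(K₂₁ x) + (J₂₁ x * (J₁₁ x)⁻¹) * (-K₁₂ x) * (J₂₁ x * (J₁₁ x)⁻¹)) := by
  have miura : ∀ x, dM (fun s => J₂₁ s * (J₁₁ s)⁻¹) x =
      -K₂₁ x - (J₂₁ x * (J₁₁ x)⁻¹) * K₁₂ x * (J₂₁ x * (J₁₁ x)⁻¹) := by
    intro x
    have hJ₁₁ : ∀ i j, DifferentiableAt ℝ (fun s => J₁₁ s i j) x := fun i j => hJ₁₁d i j x
    have hdet : IsUnit (J₁₁ x).det := (Matrix.isUnit_iff_isUnit_det _).mp (hJinv x)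
    rw [dM_mul (fun i j => hJ₂₁d i j x) (differentiableAt_inv_apply hJ₁₁ hdet), dM_inv hJ₁₁ hdet,
      h1, h2]
    simp only [Matrix.neg_mul, Matrix.mul_neg, Matrix.mul_assoc, Matrix.mul_nonsing_inv _ hdet,
      Matrix.mul_one, sub_eq_add_neg]
  refine ⟨miura, fun x => ?_⟩
  rw [miura x, Matrix.mul_neg, Matrix.neg_mul, sub_eq_add_neg]

/-- **Miura-type relation between the matrix AKNS and Gerdjikov–Ivanov variables.**
If `∂_x J₁₁ = K₁₂J₂₁` and `∂_x J₂₁ = −K₂₁J₁₁` with `J₁₁` pointwise invertible, then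
`P = J₂₁·J₁₁⁻¹` satisfies `∂_x P = −K₂₁ − P·K₁₂·P`; equivalently, with
`R = K₂₁`, `Q = −K₁₂`, the relation `∂_x P = −R + PQP` holds. -/
theorem asdym_miura_relation (m₁ m₂ : ℕ) (hm₁ : 1 ≤ m₁) (hm₂ : 1 ≤ m₂)
    (J₁₁ : ℝ → Matrix (Fin m₁) (Fin m₁) ℂ)
    (J₂₁ : ℝ → Matrix (Fin m₂) (Fin m₁) ℂ)
    (K₁₂ : ℝ → Matrix (Fin m₁) (Fin m₂) ℂ)
    (K₂₁ : ℝ → Matrix (Fin m₂) (Fin m₁) ℂ)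
    (hJ₁₁d : ∀ i j, Differentiable ℝ fun x => J₁₁ x i j)
    (hJ₂₁d : ∀ i j, Differentiable ℝ fun x => J₂₁ x i j)
    (hK₁₂d : ∀ i j, Differentiable ℝ fun x => K₁₂ x i j)
    (hK₂₁d : ∀ i j, Differentiable ℝ fun x => K₂₁ x i j)
    (hJinv : ∀ x, IsUnit (J₁₁ x))
    (h1 : ∀ x, dM J₁₁ x = K₁₂ x * J₂₁ x)
    (h2 : ∀ x, dM J₂₁ x = -(K₂₁ x * J₁₁ x)) :
    (∀ x, dM (fun s => J₂₁ s * (J₁₁ s)⁻¹) x =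
      -K₂₁ x - (J₂₁ x * (J₁₁ x)⁻¹) * K₁₂ x * (J₂₁ x * (J₁₁ x)⁻¹)) ∧
    (∀ x, dM (fun s => J₂₁ s * (J₁₁ s)⁻¹) x =
      -(K₂₁ x) + (J₂₁ x * (J₁₁ x)⁻¹) * (-K₁₂ x) * (J₂₁ x * (J₁₁ x)⁻¹)) :=
  asdym_miura_relation_general m₁ m₂ J₁₁ J₂₁ K₁₂ K₂₁ hJ₁₁d hJ₂₁d hJinv h1 h2

end
end

section
/- Let m₁, m₂ ≥ 1 and let K₁₁, K₁₂, K₂₁, K₂₂, J₁₁, J₂₁ be smooth functions on ℝ³, coordinates (x, τ, σ), with values in complex matrices of sizes m₁×m₁, m₁×m₂, m₂×m₁, m₂×m₂, m₁×m₁, m₂×m₁ respectively, J₁₁ pointwise invertible. Assume at every point: ∂_x J₁₁ = K₁₂J₂₁; ∂_x J₂₁ = −K₂₁J₁₁; ∂_σ J₁₁ = −(∂_τK₁₁)J₁₁ − (∂_τK₁₂)J₂₁; ∂_σ J₂₁ = −(∂_τK₂₁)J₁₁ − (∂_τK₂₂)J₂₁; ∂_x K₁₁ = K₁₂K₂₁;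 ∂_x K₂₂ = −K₂₁K₁₂; ∂_σ K₂₁ = ∂_x∂_τ K₂₁ − (∂_τK₂₂)K₂₁ + K₂₁(∂_τK₁₁); and ∂_σ K₁₂ = −∂_x∂_τ K₁₂ − (∂_τK₁₁)K₁₂ + K₁₂(∂_τK₂₂). Then P := J₂₁J₁₁⁻¹ and Q := −K₁₂, together with Φ := QP − K₁₁ and Ψ := PQ + K₂₂, satisfy: ∂_xΨ = P(∂_xQ) + PQPQ; ∂_xΦ = (∂_xQ)P + QPQP; the matrix Gerdjikov–Ivanov recursion step ∂_σ P = ∂_x∂_τ P − (∂_τΨ)·P − P·(∂_τΦ); and ∂_σ Q = −∂_x∂_τ Q − (∂_τK₁₁)·Q + Q·(∂_τK₂₂), where moreover ∂_x K₁₁ = Q(∂_xP) − QPQP and ∂_x K₂₂ = −(∂_xP)Q + PQPQ. -/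
noncomputable section

namespace GIaux
open Matrix

set_option linter.unusedSectionVars false

/-- entrywise derivative of a one-parameter matrix family -/
def D {a b : Type*} (F : ℝ → Matrix a b ℂ) (t : ℝ) : Matrix a b ℂ :=
  Matrix.of fun i j => deriv (fun s => F s i j) t

variable {a b c : Type*} [Fintype b]

lemma D_mul (F : ℝ → Matrix a b ℂ) (G : ℝ → Matrix b c ℂ) (t : ℝ)
    (hF : ∀ i j, DifferentiableAt ℝ (fun s => F s i j) t)
    (hG : ∀ i j, DifferentiableAt ℝ (fun s => G s i j) t) :
    D (fun s => F s * G s) t = D F t * G t + F t * D G t := by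
  ext i j
  have h1 : (fun s => (F s * G s) i j) = fun s => ∑ k, F s i k * G s k j := by
    funext s; simp [Matrix.mul_apply]
  simp only [D, Matrix.add_apply, Matrix.of_apply, Matrix.mul_apply, h1]
  rw [deriv_fun_sum (fun k _ => ((hF i k).fun_mul (hG k j)))]
  rw [← Finset.sum_add_distrib]
  congr 1; funext k
  rw [deriv_fun_mul (hF i k) (hG k j)]

lemma D_add (F G : ℝ → Matrix a b ℂ) (t : ℝ)
    (hF : ∀ i j, DifferentiableAt ℝ (fun s => F s i j) t)
    (hG : ∀ i j, DifferentiableAt ℝ (fun s => G s i j) t) :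
    D (fun s => F s + G s) t = D F t + D G t := by
  ext i j
  simp only [D, Matrix.add_apply, Matrix.of_apply]
  exact deriv_add (hF i j) (hG i j)

lemma D_neg (F : ℝ → Matrix a b ℂ) (t : ℝ) :
    D (fun s => -F s) t = -D F t := by
  ext i j
  simp only [D, Matrix.neg_apply, Matrix.of_apply]
  exact deriv.neg

lemma D_sub (F G : ℝ → Matrix a b ℂ) (t : ℝ)
    (hF : ∀ i j, DifferentiableAt ℝ (fun s => F s i j) t)
    (hG : ∀ i j, DifferentiableAt ℝ (fun s => G s i j) t) :
    D (fun s => F s - G s) t = D F t - D G t := by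
  ext i j
  simp only [D, Matrix.sub_apply, Matrix.of_apply]
  exact deriv_sub (hF i j) (hG i j)

lemma D_const (C : Matrix a b ℂ) (t : ℝ) : D (fun _ => C) t = 0 := by
  ext i j; simp [D]

lemma contDiff_det {n : ℕ} (M : ℝ × ℝ × ℝ → Matrix (Fin n) (Fin n) ℂ)
    (hM : ∀ i j, ContDiff ℝ (⊤ : ℕ∞) fun p => M p i j) :
    ContDiff ℝ (⊤ : ℕ∞) fun p => (M p).det := by
  have h : (fun p => (M p).det)
      = fun p => ∑ σ : Equiv.Perm (Fin n), (Equiv.Perm.sign σ : ℂ) * ∏ i, M p (σ i) i := by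
    funext p; rw [Matrix.det_apply']
  rw [h]
  exact ContDiff.sum fun σ _ => contDiff_const.mul (contDiff_prod fun i _ => hM (σ i) i)

lemma contDiff_adjugate {n : ℕ} (M : ℝ × ℝ × ℝ → Matrix (Fin n) (Fin n) ℂ)
    (hM : ∀ i j, ContDiff ℝ (⊤ : ℕ∞) fun p => M p i j) (i j : Fin n) :
    ContDiff ℝ (⊤ : ℕ∞) fun p => (M p).adjugate i j := by
  have h : (fun p => (M p).adjugate i j)
      = fun p => ((M p).updateRow j (Pi.single i 1)).det := by
    funext p; rw [Matrix.adjugate_apply]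
  rw [h]
  apply contDiff_det
  intro i' j'
  rcases eq_or_ne i' j with rfl | hne
  · simp only [Matrix.updateRow_apply, if_pos rfl]
    exact contDiff_const
  · simp only [Matrix.updateRow_apply, if_neg hne]
    exact hM i' j'

lemma contDiff_inv_entry {n : ℕ} (M : ℝ × ℝ × ℝ → Matrix (Fin n) (Fin n) ℂ)
    (hM : ∀ i j, ContDiff ℝ (⊤ : ℕ∞) fun p => M p i j) (hu : ∀ p, IsUnit (M p)) (i j : Fin n) :
    ContDiff ℝ (⊤ : ℕ∞) fun p => (M p)⁻¹ i j := by
  have hdet : ∀ p, (M p).det ≠ 0 := fun p =>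
    (Matrix.isUnit_iff_isUnit_det _ |>.mp (hu p)).ne_zero
  have h : (fun p => (M p)⁻¹ i j) = fun p => ((M p).det)⁻¹ * (M p).adjugate i j := by
    funext p
    rw [Matrix.inv_def, Matrix.smul_apply, Ring.inverse_eq_inv', smul_eq_mul]
  rw [h]
  exact ((contDiff_det M hM).inv hdet).mul (contDiff_adjugate M hM i j)

lemma D_inv {n : ℕ} (F : ℝ → Matrix (Fin n) (Fin n) ℂ) (t : ℝ)
    (hF : ∀ i j, DifferentiableAt ℝ (fun s => F s i j) t)
    (hFi : ∀ i j, DifferentiableAt ℝ (fun s => (F s)⁻¹ i j) t)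
    (hu : ∀ s, IsUnit (F s)) :
    D (fun s => (F s)⁻¹) t = -((F t)⁻¹ * D F t * (F t)⁻¹) := by
  have hud : ∀ s, IsUnit (F s).det := fun s => (Matrix.isUnit_iff_isUnit_det _).mp (hu s)
  have h1 : D (fun s => F s * (F s)⁻¹) t = D F t * (F t)⁻¹ + F t * D (fun s => (F s)⁻¹) t :=
    D_mul F (fun s => (F s)⁻¹) t hF hFi
  have h2 : (fun s => F s * (F s)⁻¹) = fun _ => (1 : Matrix (Fin n) (Fin n) ℂ) := by
    funext s; exact Matrix.mul_nonsing_inv _ (hud s)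
  rw [h2, D_const] at h1
  have h3 : (F t)⁻¹ * (D F t * (F t)⁻¹ + F t * D (fun s => (F s)⁻¹) t) = 0 := by
    rw [← h1, Matrix.mul_zero]
  rw [Matrix.mul_add, ← Matrix.mul_assoc, ← Matrix.mul_assoc,
    Matrix.nonsing_inv_mul _ (hud t), Matrix.one_mul] at h3
  have := eq_neg_of_add_eq_zero_right h3
  rw [this, Matrix.mul_assoc]

/-- Clairaut / Schwarz for a smooth function on `ℝ × ℝ`. -/
lemma clairaut (f : ℝ × ℝ → ℂ) (hf : ContDiff ℝ (⊤ : ℕ∞) f) (a b : ℝ) :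
    deriv (fun s => deriv (fun t => f (s, t)) b) a
      = deriv (fun t => deriv (fun s => f (s, t)) a) b := by
  have hd : Differentiable ℝ f := hf.differentiable (by simp)
  have hF : ContDiff ℝ (⊤ : ℕ∞) (fderiv ℝ f) := hf.fderiv_right (by simp)
  have hFd : Differentiable ℝ (fderiv ℝ f) := hF.differentiable (by simp)
  set f'' := fderiv ℝ (fderiv ℝ f) (a, b) with hf''
  have hsymm : ∀ v w, f'' v w = f'' w v :=
    second_derivative_symmetric (fun y => (hd y).hasFDerivAt) (hFd (a, b)).hasFDerivAt
  have inner1 : ∀ s b' : ℝ, deriv (fun t => f (s, t)) b' = fderiv ℝ f (s, b') (0, 1) := by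
    intro s b'
    have hline : HasDerivAt (fun t : ℝ => ((s, t) : ℝ × ℝ)) (0, 1) b' :=
      (hasDerivAt_const b' s).prodMk (hasDerivAt_id b')
    exact ((hd (s, b')).hasFDerivAt.comp_hasDerivAt b' hline).deriv
  have inner2 : ∀ t a' : ℝ, deriv (fun s => f (s, t)) a' = fderiv ℝ f (a', t) (1, 0) := by
    intro t a'
    have hline : HasDerivAt (fun s : ℝ => ((s, t) : ℝ × ℝ)) (1, 0) a' :=
      (hasDerivAt_id a').prodMk (hasDerivAt_const a' t)
    exact ((hd (a', t)).hasFDerivAt.comp_hasDerivAt a' hline).deriv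
  have outer1 : deriv (fun s => fderiv ℝ f (s, b) (0, 1)) a = f'' (1, 0) (0, 1) := by
    have hline : HasDerivAt (fun s : ℝ => ((s, b) : ℝ × ℝ)) (1, 0) a :=
      (hasDerivAt_id a).prodMk (hasDerivAt_const a b)
    have h1 : HasDerivAt (fun s : ℝ => fderiv ℝ f (s, b)) (f'' (1, 0)) a :=
      (hFd (a, b)).hasFDerivAt.comp_hasDerivAt a hline
    have h2 := ((ContinuousLinearMap.apply ℝ ℂ ((0 : ℝ), (1 : ℝ))).hasFDerivAt.comp_hasDerivAt a h1)
    simpa [Function.comp_def] using h2.deriv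
  have outer2 : deriv (fun t => fderiv ℝ f (a, t) (1, 0)) b = f'' (0, 1) (1, 0) := by
    have hline : HasDerivAt (fun t : ℝ => ((a, t) : ℝ × ℝ)) (0, 1) b :=
      (hasDerivAt_const b a).prodMk (hasDerivAt_id b)
    have h1 : HasDerivAt (fun t : ℝ => fderiv ℝ f (a, t)) (f'' (0, 1)) b :=
      (hFd (a, b)).hasFDerivAt.comp_hasDerivAt b hline
    have h2 := ((ContinuousLinearMap.apply ℝ ℂ ((1 : ℝ), (0 : ℝ))).hasFDerivAt.comp_hasDerivAt b h1)
    simpa [Function.comp_def] using h2.deriv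
  calc deriv (fun s => deriv (fun t => f (s, t)) b) a
      = deriv (fun s => fderiv ℝ f (s, b) (0, 1)) a := by
        congr 1; funext s; exact inner1 s b
    _ = f'' (1, 0) (0, 1) := outer1
    _ = f'' (0, 1) (1, 0) := hsymm _ _
    _ = deriv (fun t => fderiv ℝ f (a, t) (1, 0)) b := outer2.symm
    _ = deriv (fun t => deriv (fun s => f (s, t)) a) b := by
        congr 1; funext t; exact (inner2 t a).symm

/-- entrywise smoothness of a matrix-valued function -/
def Sm {a b : Type*} (f : ℝ × ℝ × ℝ → Matrix a b ℂ) : Prop :=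
  ∀ i j, ContDiff ℝ (⊤ : ℕ∞) fun p => f p i j

lemma Sm_mul (f : ℝ × ℝ × ℝ → Matrix a b ℂ) (g : ℝ × ℝ × ℝ → Matrix b c ℂ)
    (hf : Sm f) (hg : Sm g) : Sm fun q => f q * g q := by
  intro i j
  show ContDiff ℝ (⊤ : ℕ∞) fun p => (f p * g p) i j
  have h : (fun p => (f p * g p) i j) = fun p => ∑ k, f p i k * g p k j := by
    funext p; rw [Matrix.mul_apply]
  rw [h]
  exact ContDiff.sum fun k _ => (hf i k).mul (hg k j)

lemma Sm_neg (f : ℝ × ℝ × ℝ → Matrix a b ℂ) (hf : Sm f) : Sm fun q => -f q :=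
  fun i j => (hf i j).neg

lemma diffX (g : ℝ × ℝ × ℝ → ℂ) (hg : ContDiff ℝ (⊤ : ℕ∞) g) (b c t : ℝ) :
    DifferentiableAt ℝ (fun s => g (s, b, c)) t :=
  ((hg.comp ((contDiff_id (E := ℝ)).prodMk contDiff_const)).differentiable (by simp)) t

lemma diffT (g : ℝ × ℝ × ℝ → ℂ) (hg : ContDiff ℝ (⊤ : ℕ∞) g) (a c t : ℝ) :
    DifferentiableAt ℝ (fun s => g (a, s, c)) t :=
  ((hg.comp (contDiff_const.prodMk ((contDiff_id (E := ℝ)).prodMk contDiff_const))).differentiable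
    (by simp)) t

lemma diffS (g : ℝ × ℝ × ℝ → ℂ) (hg : ContDiff ℝ (⊤ : ℕ∞) g) (a b t : ℝ) :
    DifferentiableAt ℝ (fun s => g (a, b, s)) t :=
  ((hg.comp (contDiff_const.prodMk (contDiff_const.prodMk (contDiff_id (E := ℝ))))).differentiable
    (by simp)) t

lemma pdx_mul (f : ℝ × ℝ × ℝ → Matrix a b ℂ) (g : ℝ × ℝ × ℝ → Matrix b c ℂ)
    (hf : Sm f) (hg : Sm g) (p : ℝ × ℝ × ℝ) :
    pdx (fun q => f q * g q) p = pdx f p * g p + f p * pdx g p :=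
  D_mul (fun s => f (s, p.2.1, p.2.2)) (fun s => g (s, p.2.1, p.2.2)) p.1
    (fun i j => diffX _ (hf i j) _ _ _) (fun i j => diffX _ (hg i j) _ _ _)

lemma pdτ_mul (f : ℝ × ℝ × ℝ → Matrix a b ℂ) (g : ℝ × ℝ × ℝ → Matrix b c ℂ)
    (hf : Sm f) (hg : Sm g) (p : ℝ × ℝ × ℝ) :
    pdτ (fun q => f q * g q) p = pdτ f p * g p + f p * pdτ g p :=
  D_mul (fun s => f (p.1, s, p.2.2)) (fun s => g (p.1, s, p.2.2)) p.2.1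
    (fun i j => diffT _ (hf i j) _ _ _) (fun i j => diffT _ (hg i j) _ _ _)

lemma pdσ_mul (f : ℝ × ℝ × ℝ → Matrix a b ℂ) (g : ℝ × ℝ × ℝ → Matrix b c ℂ)
    (hf : Sm f) (hg : Sm g) (p : ℝ × ℝ × ℝ) :
    pdσ (fun q => f q * g q) p = pdσ f p * g p + f p * pdσ g p :=
  D_mul (fun s => f (p.1, p.2.1, s)) (fun s => g (p.1, p.2.1, s)) p.2.2
    (fun i j => diffS _ (hf i j) _ _ _) (fun i j => diffS _ (hg i j) _ _ _)

lemma pdx_add (f g : ℝ × ℝ × ℝ → Matrix a b ℂ) (hf : Sm f) (hg : Sm g) (p : ℝ × ℝ × ℝ) :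
    pdx (fun q => f q + g q) p = pdx f p + pdx g p :=
  D_add (fun s => f (s, p.2.1, p.2.2)) (fun s => g (s, p.2.1, p.2.2)) p.1
    (fun i j => diffX _ (hf i j) _ _ _) (fun i j => diffX _ (hg i j) _ _ _)

lemma pdx_sub (f g : ℝ × ℝ × ℝ → Matrix a b ℂ) (hf : Sm f) (hg : Sm g) (p : ℝ × ℝ × ℝ) :
    pdx (fun q => f q - g q) p = pdx f p - pdx g p :=
  D_sub (fun s => f (s, p.2.1, p.2.2)) (fun s => g (s, p.2.1, p.2.2)) p.1
    (fun i j => diffX _ (hf i j) _ _ _) (fun i j => diffX _ (hg i j) _ _ _)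

lemma pdτ_add (f g : ℝ × ℝ × ℝ → Matrix a b ℂ) (hf : Sm f) (hg : Sm g) (p : ℝ × ℝ × ℝ) :
    pdτ (fun q => f q + g q) p = pdτ f p + pdτ g p :=
  D_add (fun s => f (p.1, s, p.2.2)) (fun s => g (p.1, s, p.2.2)) p.2.1
    (fun i j => diffT _ (hf i j) _ _ _) (fun i j => diffT _ (hg i j) _ _ _)

lemma pdτ_sub (f g : ℝ × ℝ × ℝ → Matrix a b ℂ) (hf : Sm f) (hg : Sm g) (p : ℝ × ℝ × ℝ) :
    pdτ (fun q => f q - g q) p = pdτ f p - pdτ g p :=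
  D_sub (fun s => f (p.1, s, p.2.2)) (fun s => g (p.1, s, p.2.2)) p.2.1
    (fun i j => diffT _ (hf i j) _ _ _) (fun i j => diffT _ (hg i j) _ _ _)

lemma pdx_neg (f : ℝ × ℝ × ℝ → Matrix a b ℂ) (p : ℝ × ℝ × ℝ) :
    pdx (fun q => -f q) p = -pdx f p :=
  D_neg (fun s => f (s, p.2.1, p.2.2)) p.1

lemma pdτ_neg (f : ℝ × ℝ × ℝ → Matrix a b ℂ) (p : ℝ × ℝ × ℝ) :
    pdτ (fun q => -f q) p = -pdτ f p :=
  D_neg (fun s => f (p.1, s, p.2.2)) p.2.1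

lemma pdσ_neg (f : ℝ × ℝ × ℝ → Matrix a b ℂ) (p : ℝ × ℝ × ℝ) :
    pdσ (fun q => -f q) p = -pdσ f p :=
  D_neg (fun s => f (p.1, p.2.1, s)) p.2.2

lemma pdx_inv {n : ℕ} (J : ℝ × ℝ × ℝ → Matrix (Fin n) (Fin n) ℂ)
    (hJ : Sm J) (hu : ∀ p, IsUnit (J p)) (p : ℝ × ℝ × ℝ) :
    pdx (fun q => (J q)⁻¹) p = -((J p)⁻¹ * pdx J p * (J p)⁻¹) :=
  D_inv (fun s => J (s, p.2.1, p.2.2)) p.1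
    (fun i j => diffX _ (hJ i j) _ _ _)
    (fun i j => diffX _ (contDiff_inv_entry J hJ hu i j) _ _ _)
    (fun s => hu (s, p.2.1, p.2.2))

lemma pdσ_inv {n : ℕ} (J : ℝ × ℝ × ℝ → Matrix (Fin n) (Fin n) ℂ)
    (hJ : Sm J) (hu : ∀ p, IsUnit (J p)) (p : ℝ × ℝ × ℝ) :
    pdσ (fun q => (J q)⁻¹) p = -((J p)⁻¹ * pdσ J p * (J p)⁻¹) :=
  D_inv (fun s => J (p.1, p.2.1, s)) p.2.2
    (fun i j => diffS _ (hJ i j) _ _ _)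
    (fun i j => diffS _ (contDiff_inv_entry J hJ hu i j) _ _ _)
    (fun s => hu (p.1, p.2.1, s))

lemma pdx_pdτ_comm (f : ℝ × ℝ × ℝ → Matrix a b ℂ) (hf : Sm f) (p : ℝ × ℝ × ℝ) :
    pdx (fun q => pdτ f q) p = pdτ (fun q => pdx f q) p := by
  ext i j
  exact clairaut (fun v : ℝ × ℝ => f (v.1, v.2, p.2.2) i j)
    ((hf i j).comp (contDiff_fst.prodMk (contDiff_snd.prodMk contDiff_const))) p.1 p.2.1

end GIaux

/-- **Reduction of the ASDYM hierarchy to the matrix Gerdjikov–Ivanov recursion step.**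
Under the blockwise ASDYM relations, `P = J₂₁J₁₁⁻¹`, `Q = −K₁₂`, `Φ = QP − K₁₁`,
`Ψ = PQ + K₂₂` satisfy `∂_xΨ = P(∂_xQ) + PQPQ`, `∂_xΦ = (∂_xQ)P + QPQP`,
`∂_σ P = ∂_x∂_τ P − (∂_τΨ)P − P(∂_τΦ)`,
`∂_σ Q = −∂_x∂_τ Q − (∂_τK₁₁)Q + Q(∂_τK₂₂)`, together with
`∂_x K₁₁ = Q(∂_xP) − QPQP` and `∂_x K₂₂ = −(∂_xP)Q + PQPQ`. -/
theorem asdym_reduction_matrix_GI (m₁ m₂ : ℕ) (hm₁ : 1 ≤ m₁) (hm₂ : 1 ≤ m₂)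
    (K₁₁ : ℝ × ℝ × ℝ → Matrix (Fin m₁) (Fin m₁) ℂ)
    (K₁₂ : ℝ × ℝ × ℝ → Matrix (Fin m₁) (Fin m₂) ℂ)
    (K₂₁ : ℝ × ℝ × ℝ → Matrix (Fin m₂) (Fin m₁) ℂ)
    (K₂₂ : ℝ × ℝ × ℝ → Matrix (Fin m₂) (Fin m₂) ℂ)
    (J₁₁ : ℝ × ℝ × ℝ → Matrix (Fin m₁) (Fin m₁) ℂ)
    (J₂₁ : ℝ × ℝ × ℝ → Matrix (Fin m₂) (Fin m₁) ℂ)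
    (hK₁₁s : ∀ i j, ContDiff ℝ (⊤ : ℕ∞) fun p => K₁₁ p i j)
    (hK₁₂s : ∀ i j, ContDiff ℝ (⊤ : ℕ∞) fun p => K₁₂ p i j)
    (hK₂₁s : ∀ i j, ContDiff ℝ (⊤ : ℕ∞) fun p => K₂₁ p i j)
    (hK₂₂s : ∀ i j, ContDiff ℝ (⊤ : ℕ∞) fun p => K₂₂ p i j)
    (hJ₁₁s : ∀ i j, ContDiff ℝ (⊤ : ℕ∞) fun p => J₁₁ p i j)
    (hJ₂₁s : ∀ i j, ContDiff ℝ (⊤ : ℕ∞) fun p => J₂₁ p i j)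
    (hJinv : ∀ p, IsUnit (J₁₁ p))
    (h1 : ∀ p, pdx J₁₁ p = K₁₂ p * J₂₁ p)
    (h2 : ∀ p, pdx J₂₁ p = -(K₂₁ p * J₁₁ p))
    (h3 : ∀ p, pdσ J₁₁ p = -(pdτ K₁₁ p * J₁₁ p) - pdτ K₁₂ p * J₂₁ p)
    (h4 : ∀ p, pdσ J₂₁ p = -(pdτ K₂₁ p * J₁₁ p) - pdτ K₂₂ p * J₂₁ p)
    (h5 : ∀ p, pdx K₁₁ p = K₁₂ p * K₂₁ p)
    (h6 : ∀ p, pdx K₂₂ p = -(K₂₁ p * K₁₂ p))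
    (h7 : ∀ p, pdσ K₂₁ p = pdx (fun q => pdτ K₂₁ q) p
        - pdτ K₂₂ p * K₂₁ p + K₂₁ p * pdτ K₁₁ p)
    (h8 : ∀ p, pdσ K₁₂ p = -(pdx (fun q => pdτ K₁₂ q) p)
        - pdτ K₁₁ p * K₁₂ p + K₁₂ p * pdτ K₂₂ p) :
    (∀ p, pdx (fun q => (J₂₁ q * (J₁₁ q)⁻¹) * (-K₁₂ q) + K₂₂ q) p =
        (J₂₁ p * (J₁₁ p)⁻¹) * pdx (fun q => -K₁₂ q) p
        + (J₂₁ p * (J₁₁ p)⁻¹) * (-K₁₂ p) * (J₂₁ p * (J₁₁ p)⁻¹) * (-K₁₂ p)) ∧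
    (∀ p, pdx (fun q => (-K₁₂ q) * (J₂₁ q * (J₁₁ q)⁻¹) - K₁₁ q) p =
        pdx (fun q => -K₁₂ q) p * (J₂₁ p * (J₁₁ p)⁻¹)
        + (-K₁₂ p) * (J₂₁ p * (J₁₁ p)⁻¹) * (-K₁₂ p) * (J₂₁ p * (J₁₁ p)⁻¹)) ∧
    (∀ p, pdσ (fun q => J₂₁ q * (J₁₁ q)⁻¹) p =
        pdx (fun q => pdτ (fun q' => J₂₁ q' * (J₁₁ q')⁻¹) q) p
        - pdτ (fun q => (J₂₁ q * (J₁₁ q)⁻¹) * (-K₁₂ q) + K₂₂ q) p * (J₂₁ p * (J₁₁ p)⁻¹)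
        - (J₂₁ p * (J₁₁ p)⁻¹) * pdτ (fun q => (-K₁₂ q) * (J₂₁ q * (J₁₁ q)⁻¹) - K₁₁ q) p) ∧
    (∀ p, pdσ (fun q => -K₁₂ q) p =
        -(pdx (fun q => pdτ (fun q' => -K₁₂ q') q) p)
        - pdτ K₁₁ p * (-K₁₂ p) + (-K₁₂ p) * pdτ K₂₂ p) ∧
    (∀ p, pdx K₁₁ p = (-K₁₂ p) * pdx (fun q => J₂₁ q * (J₁₁ q)⁻¹) p
        - (-K₁₂ p) * (J₂₁ p * (J₁₁ p)⁻¹) * (-K₁₂ p) * (J₂₁ p * (J₁₁ p)⁻¹)) ∧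
    (∀ p, pdx K₂₂ p = -(pdx (fun q => J₂₁ q * (J₁₁ q)⁻¹) p * (-K₁₂ p))
        + (J₂₁ p * (J₁₁ p)⁻¹) * (-K₁₂ p) * (J₂₁ p * (J₁₁ p)⁻¹) * (-K₁₂ p)) := by
  have hdet : ∀ p, IsUnit (J₁₁ p).det := fun p => (Matrix.isUnit_iff_isUnit_det _).mp (hJinv p)
  have e1 : ∀ p, J₁₁ p * (J₁₁ p)⁻¹ = 1 := fun p => Matrix.mul_nonsing_inv _ (hdet p)
  have sJi : GIaux.Sm fun q => (J₁₁ q)⁻¹ := GIaux.contDiff_inv_entry J₁₁ hJ₁₁s hJinv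
  have sP : GIaux.Sm fun q => J₂₁ q * (J₁₁ q)⁻¹ := GIaux.Sm_mul _ _ hJ₂₁s sJi
  have sQ : GIaux.Sm fun q => -K₁₂ q := GIaux.Sm_neg _ hK₁₂s
  -- x-derivative of P
  have hJix : ∀ p, pdx (fun q => (J₁₁ q)⁻¹) p
      = -((J₁₁ p)⁻¹ * (K₁₂ p * J₂₁ p) * (J₁₁ p)⁻¹) := by
    intro p
    have hbase := GIaux.pdx_inv J₁₁ hJ₁₁s hJinv p
    rw [h1 p] at hbase
    exact hbase
  have hPx : ∀ p, pdx (fun q => J₂₁ q * (J₁₁ q)⁻¹) p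
      = -(K₂₁ p) - J₂₁ p * (J₁₁ p)⁻¹ * K₁₂ p * (J₂₁ p * (J₁₁ p)⁻¹) := by
    intro p
    have hm : pdx (fun q => J₂₁ q * (J₁₁ q)⁻¹) p
        = pdx J₂₁ p * (J₁₁ p)⁻¹ + J₂₁ p * pdx (fun q => (J₁₁ q)⁻¹) p :=
      GIaux.pdx_mul J₂₁ (fun q => (J₁₁ q)⁻¹) hJ₂₁s sJi p
    rw [hm, hJix p, h2 p]
    simp only [Matrix.mul_assoc, Matrix.neg_mul, Matrix.mul_neg, e1 p, Matrix.mul_one,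
      Matrix.one_mul, sub_eq_add_neg]
  refine ⟨?_, ?_, ?_, ?_, ?_, ?_⟩
  · -- goal 1 : ∂ₓΨ
    intro p
    have m1 : pdx (fun q => (J₂₁ q * (J₁₁ q)⁻¹) * (-K₁₂ q) + K₂₂ q) p
        = pdx (fun q => (J₂₁ q * (J₁₁ q)⁻¹) * (-K₁₂ q)) p + pdx K₂₂ p :=
      GIaux.pdx_add _ K₂₂ (GIaux.Sm_mul _ _ sP sQ) hK₂₂s p
    have m2 : pdx (fun q => (J₂₁ q * (J₁₁ q)⁻¹) * (-K₁₂ q)) p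
        = pdx (fun q => J₂₁ q * (J₁₁ q)⁻¹) p * (-K₁₂ p)
          + (J₂₁ p * (J₁₁ p)⁻¹) * pdx (fun q => -K₁₂ q) p :=
      GIaux.pdx_mul _ _ sP sQ p
    rw [m1, m2, hPx p, h6 p]
    simp only [Matrix.mul_assoc, Matrix.neg_mul, Matrix.mul_neg, Matrix.sub_mul,
      Matrix.add_mul, Matrix.mul_add, Matrix.mul_sub, neg_neg, sub_eq_add_neg]
    abel
  · -- goal 2 : ∂ₓΦ
    intro p
    have m1 : pdx (fun q => (-K₁₂ q) * (J₂₁ q * (J₁₁ q)⁻¹) - K₁₁ q) p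
        = pdx (fun q => (-K₁₂ q) * (J₂₁ q * (J₁₁ q)⁻¹)) p - pdx K₁₁ p :=
      GIaux.pdx_sub _ K₁₁ (GIaux.Sm_mul _ _ sQ sP) hK₁₁s p
    have m2 : pdx (fun q => (-K₁₂ q) * (J₂₁ q * (J₁₁ q)⁻¹)) p
        = pdx (fun q => -K₁₂ q) p * (J₂₁ p * (J₁₁ p)⁻¹)
          + (-K₁₂ p) * pdx (fun q => J₂₁ q * (J₁₁ q)⁻¹) p :=
      GIaux.pdx_mul _ _ sQ sP p
    rw [m1, m2, hPx p, h5 p]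
    simp only [Matrix.mul_assoc, Matrix.neg_mul, Matrix.mul_neg, Matrix.sub_mul,
      Matrix.add_mul, Matrix.mul_add, Matrix.mul_sub, neg_neg, sub_eq_add_neg]
    abel
  · -- goal 3 : σ-flow of P
    intro p
    -- LHS
    have hJiσ : pdσ (fun q => (J₁₁ q)⁻¹) p
        = -((J₁₁ p)⁻¹ * pdσ J₁₁ p * (J₁₁ p)⁻¹) := GIaux.pdσ_inv J₁₁ hJ₁₁s hJinv p
    have hmσ : pdσ (fun q => J₂₁ q * (J₁₁ q)⁻¹) p
        = pdσ J₂₁ p * (J₁₁ p)⁻¹ + J₂₁ p * pdσ (fun q => (J₁₁ q)⁻¹) p :=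
      GIaux.pdσ_mul J₂₁ (fun q => (J₁₁ q)⁻¹) hJ₂₁s sJi p
    -- mixed derivative via Clairaut
    have hcomm : pdx (fun q => pdτ (fun q' => J₂₁ q' * (J₁₁ q')⁻¹) q) p
        = pdτ (fun q => pdx (fun q' => J₂₁ q' * (J₁₁ q')⁻¹) q) p :=
      GIaux.pdx_pdτ_comm _ sP p
    have hfun : (fun q => pdx (fun q' => J₂₁ q' * (J₁₁ q')⁻¹) q)
        = fun q => -(K₂₁ q) - J₂₁ q * (J₁₁ q)⁻¹ * K₁₂ q * (J₂₁ q * (J₁₁ q)⁻¹) :=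
      funext fun q => hPx q
    have c1 : pdτ (fun q => -(K₂₁ q) - J₂₁ q * (J₁₁ q)⁻¹ * K₁₂ q * (J₂₁ q * (J₁₁ q)⁻¹)) p
        = pdτ (fun q => -(K₂₁ q)) p
          - pdτ (fun q => J₂₁ q * (J₁₁ q)⁻¹ * K₁₂ q * (J₂₁ q * (J₁₁ q)⁻¹)) p :=
      GIaux.pdτ_sub _ _ (GIaux.Sm_neg _ hK₂₁s) (GIaux.Sm_mul _ _ (GIaux.Sm_mul _ _ sP hK₁₂s) sP) p
    have c2 : pdτ (fun q => -(K₂₁ q)) p = -pdτ K₂₁ p := GIaux.pdτ_neg K₂₁ p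
    have c3 : pdτ (fun q => J₂₁ q * (J₁₁ q)⁻¹ * K₁₂ q * (J₂₁ q * (J₁₁ q)⁻¹)) p
        = pdτ (fun q => J₂₁ q * (J₁₁ q)⁻¹ * K₁₂ q) p * (J₂₁ p * (J₁₁ p)⁻¹)
          + (J₂₁ p * (J₁₁ p)⁻¹ * K₁₂ p) * pdτ (fun q => J₂₁ q * (J₁₁ q)⁻¹) p :=
      GIaux.pdτ_mul _ _ (GIaux.Sm_mul _ _ sP hK₁₂s) sP p
    have c4 : pdτ (fun q => J₂₁ q * (J₁₁ q)⁻¹ * K₁₂ q) p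
        = pdτ (fun q => J₂₁ q * (J₁₁ q)⁻¹) p * K₁₂ p
          + (J₂₁ p * (J₁₁ p)⁻¹) * pdτ K₁₂ p :=
      GIaux.pdτ_mul _ K₁₂ sP hK₁₂s p
    -- τ derivative of Ψ and Φ
    have d1 : pdτ (fun q => (J₂₁ q * (J₁₁ q)⁻¹) * (-K₁₂ q) + K₂₂ q) p
        = pdτ (fun q => (J₂₁ q * (J₁₁ q)⁻¹) * (-K₁₂ q)) p + pdτ K₂₂ p :=
      GIaux.pdτ_add _ K₂₂ (GIaux.Sm_mul _ _ sP sQ) hK₂₂s p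
    have d2 : pdτ (fun q => (J₂₁ q * (J₁₁ q)⁻¹) * (-K₁₂ q)) p
        = pdτ (fun q => J₂₁ q * (J₁₁ q)⁻¹) p * (-K₁₂ p)
          + (J₂₁ p * (J₁₁ p)⁻¹) * pdτ (fun q => -K₁₂ q) p :=
      GIaux.pdτ_mul _ _ sP sQ p
    have d3 : pdτ (fun q => -K₁₂ q) p = -pdτ K₁₂ p := GIaux.pdτ_neg K₁₂ p
    have d4 : pdτ (fun q => (-K₁₂ q) * (J₂₁ q * (J₁₁ q)⁻¹) - K₁₁ q) p
        = pdτ (fun q => (-K₁₂ q) * (J₂₁ q * (J₁₁ q)⁻¹)) p - pdτ K₁₁ p :=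
      GIaux.pdτ_sub _ K₁₁ (GIaux.Sm_mul _ _ sQ sP) hK₁₁s p
    have d5 : pdτ (fun q => (-K₁₂ q) * (J₂₁ q * (J₁₁ q)⁻¹)) p
        = pdτ (fun q => -K₁₂ q) p * (J₂₁ p * (J₁₁ p)⁻¹)
          + (-K₁₂ p) * pdτ (fun q => J₂₁ q * (J₁₁ q)⁻¹) p :=
      GIaux.pdτ_mul _ _ sQ sP p
    rw [hmσ, hJiσ, h3 p, h4 p, hcomm, hfun, c1, c2, c3, c4, d1, d2, d3, d4, d5, d3]
    simp only [Matrix.mul_assoc, Matrix.neg_mul, Matrix.mul_neg, Matrix.sub_mul,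
      Matrix.add_mul, Matrix.mul_add, Matrix.mul_sub, neg_neg, sub_eq_add_neg,
      e1 p, Matrix.mul_one, Matrix.one_mul]
    abel
  · -- goal 4 : σ-flow of Q
    intro p
    have g1 : pdσ (fun q => -K₁₂ q) p = -pdσ K₁₂ p := GIaux.pdσ_neg K₁₂ p
    have g2 : (fun q => pdτ (fun q' => -K₁₂ q') q) = fun q => -pdτ K₁₂ q :=
      funext fun q => GIaux.pdτ_neg K₁₂ q
    have g3 : pdx (fun q => -pdτ K₁₂ q) p = -pdx (fun q => pdτ K₁₂ q) p :=
      GIaux.pdx_neg (fun q => pdτ K₁₂ q) p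
    rw [g1, g2, g3, h8 p]
    simp only [Matrix.neg_mul, Matrix.mul_neg, neg_neg, sub_eq_add_neg, neg_add]
  · -- goal 5 : ∂ₓK₁₁
    intro p
    rw [h5 p, hPx p]
    simp only [Matrix.mul_assoc, Matrix.neg_mul, Matrix.mul_neg, Matrix.sub_mul,
      Matrix.add_mul, Matrix.mul_add, Matrix.mul_sub, neg_neg, sub_eq_add_neg]
    abel
  · -- goal 6 : ∂ₓK₂₂
    intro p
    rw [h6 p, hPx p]
    simp only [Matrix.mul_assoc, Matrix.neg_mul, Matrix.mul_neg, Matrix.sub_mul,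
      Matrix.add_mul, Matrix.mul_add, Matrix.mul_sub, neg_neg, sub_eq_add_neg]
    abel

end
end

section
/- Let N ≥ 1, let Ξ ∈ M_N(ℂ) be such that Ξ and its conjugate transpose Ξ† have no common eigenvalue, let η₁, η₂ ∈ ℂ^{N×1}, and let Ω ∈ M_N(ℂ) be the unique solution of the Sylvester equation Ξ·Ω − Ω·Ξ† = η₁·η₁† + η₂·η₂†. Then Ω is skew-Hermitian: Ω† = −Ω. Moreover, if Ω is invertible, then the complex numbers q := −η₁†·Ω⁻¹·η₂ and r := η₂†·Ω⁻¹·η₁ (identifying 1×1 matrices with scalars) satisfy r = conj(q). -/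
/-!
Taking the conjugate transpose of the Sylvester equation and adding it to the original shows that
`Ω + Ωᴴ` intertwines `Ξ` and `Ξᴴ`: `Ξ (Ω + Ωᴴ) = (Ω + Ωᴴ) Ξᴴ`. Evaluating the characteristic
polynomial `χ` of `Ξ` on both sides gives `0 = (Ω + Ωᴴ) χ(Ξᴴ)`, and `χ(Ξᴴ)` is invertible by the
spectral mapping theorem because `Ξ` and `Ξᴴ` share no eigenvalue; hence `Ωᴴ = -Ω`. Then
`(Ω⁻¹)ᴴ = -Ω⁻¹`, so `(η₁ᴴ Ω⁻¹ η₂)ᴴ = -η₂ᴴ Ω⁻¹ η₁`, which is `r = conj q`.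
-/

open Matrix Polynomial

theorem Polynomial.aeval_mul_eq_mul_aeval_of_mul_eq_mul {R A : Type*} [CommSemiring R]
    [Semiring A] [Algebra R A] {a b x : A} (h : a * x = x * b) (p : R[X]) :
    aeval a p * x = x * aeval b p := by
  have hpow (k : ℕ) : a ^ k * x = x * b ^ k := (SemiconjBy.pow_right h.symm k).symm
  induction p using Polynomial.induction_on' with
  | add p q hp hq => rw [map_add, map_add, add_mul, mul_add, hp, hq]
  | monomial k c =>
    rw [aeval_monomial, aeval_monomial, mul_assoc, hpow, ← mul_assoc, Algebra.commutes,
      mul_assoc]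

namespace Matrix

variable {n : Type*} [Fintype n] [DecidableEq n]

theorem isUnit_aeval_charpoly_of_disjoint_spectrum {K : Type*} [Field K] [IsAlgClosed K]
    [Nonempty n] {A B : Matrix n n K} (hAB : Disjoint (spectrum K A) (spectrum K B)) :
    IsUnit (aeval B A.charpoly) := by
  have hdeg : 0 < A.charpoly.degree := by
    rw [charpoly_degree_eq_dim]
    exact_mod_cast Fintype.card_pos
  rw [← spectrum.zero_notMem_iff K, spectrum.map_polynomial_aeval_of_degree_pos B _ hdeg]
  rintro ⟨μ, hμB, hμ⟩
  exact hAB.notMem_of_mem_right hμB (mem_spectrum_iff_isRoot_charpoly.mpr hμ)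

theorem eq_zero_of_mul_eq_mul_of_disjoint_spectrum {K : Type*} [Field K] [IsAlgClosed K]
    {A B X : Matrix n n K} (hAB : Disjoint (spectrum K A) (spectrum K B))
    (h : A * X = X * B) : X = 0 := by
  cases isEmpty_or_nonempty n
  · exact Subsingleton.elim _ _
  have hX : 0 = X * aeval B A.charpoly := by
    rw [← aeval_mul_eq_mul_aeval_of_mul_eq_mul h, aeval_self_charpoly, zero_mul]
  exact (isUnit_aeval_charpoly_of_disjoint_spectrum hAB).mul_left_eq_zero.mp hX.symm

theorem conjTranspose_eq_neg_of_isHermitian_sub {K : Type*} [Field K] [IsAlgClosed K]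
    [StarRing K] {A X : Matrix n n K} (hA : Disjoint (spectrum K A) (spectrum K Aᴴ))
    (hC : (A * X - X * Aᴴ).IsHermitian) : Xᴴ = -X := by
  have hsym : A * X - X * Aᴴ = Xᴴ * Aᴴ - A * Xᴴ := by
    simpa only [conjTranspose_sub, conjTranspose_mul, conjTranspose_conjTranspose]
      using hC.eq.symm
  have hint : A * (X + Xᴴ) = (X + Xᴴ) * Aᴴ := by
    rw [sub_eq_sub_iff_add_eq_add] at hsym
    rw [mul_add, add_mul, hsym, add_comm]
  exact eq_neg_of_add_eq_zero_right (eq_zero_of_mul_eq_mul_of_disjoint_spectrum hA hint)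

theorem inv_neg {α : Type*} [CommRing α] (A : Matrix n n α) : (-A)⁻¹ = -A⁻¹ := by
  have hneg_one : (-1 : Matrix n n α)⁻¹ = -1 := inv_eq_left_inv (by rw [neg_mul_neg, one_mul])
  rw [← neg_one_mul, mul_inv_rev, hneg_one, mul_neg_one]

theorem conjTranspose_mul_inv_mul_of_conjTranspose_eq_neg {m α : Type*} [CommRing α]
    [StarRing α] {Ω : Matrix n n α} (hΩ : Ωᴴ = -Ω) (u v : Matrix n m α) :
    (uᴴ * Ω⁻¹ * v)ᴴ = -(vᴴ * Ω⁻¹ * u) := by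
  rw [conjTranspose_mul, conjTranspose_mul, conjTranspose_conjTranspose,
    conjTranspose_nonsing_inv, hΩ, inv_neg, Matrix.neg_mul, Matrix.mul_neg, ← Matrix.mul_assoc]

end Matrix

theorem focusing_NLS_conjugate_reduction_general (N : ℕ)
    (Ξ : Matrix (Fin N) (Fin N) ℂ)
    (hΞ : spectrum ℂ Ξ ∩ spectrum ℂ Ξᴴ = ∅)
    (η₁ η₂ : Matrix (Fin N) (Fin 1) ℂ)
    (Ω : Matrix (Fin N) (Fin N) ℂ)
    (hSyl : Ξ * Ω - Ω * Ξᴴ = η₁ * η₁ᴴ + η₂ * η₂ᴴ) :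
    Ωᴴ = -Ω ∧
    (IsUnit Ω →
      (η₂ᴴ * Ω⁻¹ * η₁) 0 0 = starRingEnd ℂ (-((η₁ᴴ * Ω⁻¹ * η₂) 0 0))) := by
  have hHerm : (Ξ * Ω - Ω * Ξᴴ).IsHermitian := by
    rw [hSyl]
    exact (isHermitian_mul_conjTranspose_self η₁).add (isHermitian_mul_conjTranspose_self η₂)
  have hskew : Ωᴴ = -Ω :=
    conjTranspose_eq_neg_of_isHermitian_sub (Set.disjoint_iff_inter_eq_empty.mpr hΞ) hHerm
  refine ⟨hskew, fun _ => ?_⟩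
  rw [map_neg, starRingEnd_apply, ← conjTranspose_apply,
    conjTranspose_mul_inv_mul_of_conjTranspose_eq_neg hskew, neg_apply, neg_neg]

/-- **Conjugate reduction to the focusing NLS equation.**
If `Ξ` and `Ξᴴ` share no eigenvalue and `Ω` solves the Sylvester equation
`ΞΩ − ΩΞᴴ = η₁η₁ᴴ + η₂η₂ᴴ`, then `Ω` is skew-Hermitian, and (when `Ω` is invertible)
the scalars `q = −η₁ᴴΩ⁻¹η₂` and `r = η₂ᴴΩ⁻¹η₁` satisfy `r = conj q`. -/
theorem focusing_NLS_conjugate_reduction (N : ℕ) (hN : 1 ≤ N)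
    (Ξ : Matrix (Fin N) (Fin N) ℂ)
    (hΞ : spectrum ℂ Ξ ∩ spectrum ℂ Ξᴴ = ∅)
    (η₁ η₂ : Matrix (Fin N) (Fin 1) ℂ)
    (Ω : Matrix (Fin N) (Fin N) ℂ)
    (hSyl : Ξ * Ω - Ω * Ξᴴ = η₁ * η₁ᴴ + η₂ * η₂ᴴ) :
    Ωᴴ = -Ω ∧
    (IsUnit Ω →
      (η₂ᴴ * Ω⁻¹ * η₁) 0 0 = starRingEnd ℂ (-((η₁ᴴ * Ω⁻¹ * η₂) 0 0))) :=
  focusing_NLS_conjugate_reduction_general N Ξ hΞ η₁ η₂ Ω hSyl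
end

section
/- Let N ≥ 1, let Ξ ∈ M_N(ℂ) be such that Ξ and its conjugate transpose Ξ† have no common eigenvalue, let η₁, η₂ ∈ ℂ^{N×1}, and let Ω ∈ M_N(ℂ) be the unique solution of the Sylvester equation Ξ·Ω − Ω·Ξ† = η₁·η₁† − η₂·η₂†·Ξ†. Then Ω + Ω† = η₂·η₂† and Ξ·Ω + Ω†·Ξ† = η₁·η₁†. -/
open Matrix Polynomial

lemma root_charpoly_mem_spectrum {N : ℕ} (M : Matrix (Fin N) (Fin N) ℂ) (μ : ℂ)
    (h : (M.charpoly).IsRoot μ) : μ ∈ spectrum ℂ M := by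
  have hdet : (μ • (1 : Matrix (Fin N) (Fin N) ℂ) - M).det = 0 := by
    have hmap : (μ • (1 : Matrix (Fin N) (Fin N) ℂ) - M) =
        (charmatrix M).map (evalRingHom μ) := by
      ext i j
      by_cases hij : i = j
      · subst hij
        simp [charmatrix_apply_eq]
      · simp [charmatrix_apply_ne _ _ _ hij, Matrix.one_apply_ne hij]
    rw [hmap, ← RingHom.mapMatrix_apply, ← RingHom.map_det]
    exact h
  rw [spectrum.mem_iff]
  intro hu
  have hud := (Matrix.isUnit_iff_isUnit_det _).mp hu
  rw [Algebra.algebraMap_eq_smul_one, hdet] at hud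
  exact not_isUnit_zero hud

lemma sylvester_unique {N : ℕ} (hN : 1 ≤ N) (A B : Matrix (Fin N) (Fin N) ℂ)
    (hAB : spectrum ℂ A ∩ spectrum ℂ B = ∅)
    (K : Matrix (Fin N) (Fin N) ℂ) (hK : A * K = K * B) : K = 0 := by
  have hpow : ∀ n : ℕ, A ^ n * K = K * B ^ n := by
    intro n
    induction n with
    | zero => simp
    | succ n ih => rw [pow_succ, pow_succ, mul_assoc, hK, ← mul_assoc, ih, mul_assoc]
  have haev : ∀ p : ℂ[X], aeval A p * K = K * aeval B p := by
    intro p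
    induction p using Polynomial.induction_on' with
    | add p q hp hq => simp [map_add, add_mul, mul_add, hp, hq]
    | monomial n c =>
      simp only [aeval_monomial]
      rw [mul_assoc, hpow n, ← mul_assoc, ← mul_assoc, Algebra.commutes]
  have h0 := haev A.charpoly
  rw [Matrix.aeval_self_charpoly, zero_mul] at h0
  have hunit : IsUnit (aeval B A.charpoly) := by
    by_contra h
    have h0mem : (0 : ℂ) ∈ spectrum ℂ (aeval B A.charpoly) :=
      (spectrum.zero_mem_iff ℂ).mpr h
    have hdeg : 0 < A.charpoly.degree := by
      rw [Matrix.charpoly_degree_eq_dim]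
      simpa using Nat.lt_of_lt_of_le Nat.zero_lt_one hN
    rw [spectrum.map_polynomial_aeval_of_degree_pos B A.charpoly hdeg] at h0mem
    obtain ⟨μ, hμB, hμ0⟩ := h0mem
    have hμA : μ ∈ spectrum ℂ A := root_charpoly_mem_spectrum A μ hμ0
    exact Set.eq_empty_iff_forall_notMem.mp hAB μ ⟨hμA, hμB⟩
  exact hunit.mul_left_eq_zero.mp h0.symm

/-- **Conjugate reduction to the focusing Gerdjikov–Ivanov DNLS equation.**
If `Ξ` and `Ξᴴ` share no eigenvalue and `Ω` solves the Sylvester equation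
`ΞΩ − ΩΞᴴ = η₁η₁ᴴ − η₂η₂ᴴΞᴴ`, then `Ω + Ωᴴ = η₂η₂ᴴ` and `ΞΩ + ΩᴴΞᴴ = η₁η₁ᴴ`. -/
theorem focusing_GI_conjugate_reduction (N : ℕ) (hN : 1 ≤ N)
    (Ξ : Matrix (Fin N) (Fin N) ℂ)
    (hΞ : spectrum ℂ Ξ ∩ spectrum ℂ Ξᴴ = ∅)
    (η₁ η₂ : Matrix (Fin N) (Fin 1) ℂ)
    (Ω : Matrix (Fin N) (Fin N) ℂ)
    (hSyl : Ξ * Ω - Ω * Ξᴴ = η₁ * η₁ᴴ - η₂ * η₂ᴴ * Ξᴴ) :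
    Ω + Ωᴴ = η₂ * η₂ᴴ ∧ Ξ * Ω + Ωᴴ * Ξᴴ = η₁ * η₁ᴴ := by
  have hSylH : Ωᴴ * Ξᴴ - Ξ * Ωᴴ = η₁ * η₁ᴴ - Ξ * (η₂ * η₂ᴴ) := by
    have h := congrArg conjTranspose hSyl
    simpa [conjTranspose_sub, conjTranspose_mul, mul_assoc] using h
  set K : Matrix (Fin N) (Fin N) ℂ := Ω + Ωᴴ - η₂ * η₂ᴴ with hKdef
  have h2 : Ξ * K - K * Ξᴴ = (Ξ * Ω - Ω * Ξᴴ) - (Ωᴴ * Ξᴴ - Ξ * Ωᴴ)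
      - Ξ * (η₂ * η₂ᴴ) + η₂ * η₂ᴴ * Ξᴴ := by
    rw [hKdef]; noncomm_ring
  rw [hSyl, hSylH] at h2
  have h3 : Ξ * K - K * Ξᴴ = 0 := by rw [h2]; noncomm_ring
  have hK0 : K = 0 := sylvester_unique hN Ξ Ξᴴ hΞ K (sub_eq_zero.mp h3)
  have hsum : Ω + Ωᴴ = η₂ * η₂ᴴ := by
    exact sub_eq_zero.mp (hKdef.symm.trans hK0)
  constructor
  · exact hsum
  · have h4 : Ξ * Ω + Ωᴴ * Ξᴴ = (Ξ * Ω - Ω * Ξᴴ) + K * Ξᴴ + η₂ * η₂ᴴ * Ξᴴ := by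
      rw [hKdef]; noncomm_ring
    rw [hSyl, hK0] at h4
    rw [h4]; noncomm_ring
end

section
/- Let N ≥ 1, let Ξ, Ω ∈ M_N(ℂ) be invertible matrices and η₁, η₂ ∈ ℂ^{N×1} be column vectors satisfying Ξ·Ω + Ω†·Ξ† = η₁·η₁† and Ω + Ω† = η₂·η₂†. Define the complex numbers (identifying 1×1 matrices with scalars) J₁₁ := 1 − η₁†·Ω⁻¹·Ξ⁻¹·η₁, J₂₁ := η₂†·Ξ†·Ω⁻¹·Ξ⁻¹·η₁, and K₁₂ := η₁†·Ω⁻¹·η₂. Then conj(K₁₂)·J₁₁ = −J₂₁ and J₁₁·conj(J₁₁) = 1. -/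
open Matrix

/-- **Conjugate reduction identities for the focusing Gerdjikov–Ivanov solitons.**
If `Ξ, Ω` are invertible with `ΞΩ + ΩᴴΞᴴ = η₁η₁ᴴ` and `Ω + Ωᴴ = η₂η₂ᴴ`, then the
scalars `J₁₁ = 1 − η₁ᴴΩ⁻¹Ξ⁻¹η₁`, `J₂₁ = η₂ᴴΞᴴΩ⁻¹Ξ⁻¹η₁`, `K₁₂ = η₁ᴴΩ⁻¹η₂` satisfy
`conj(K₁₂)·J₁₁ = −J₂₁` and `J₁₁·conj(J₁₁) = 1`. -/
theorem focusing_GI_soliton_identities (N : ℕ) (hN : 1 ≤ N)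
    (Ξ Ω : Matrix (Fin N) (Fin N) ℂ)
    (hΞ : IsUnit Ξ) (hΩ : IsUnit Ω)
    (η₁ η₂ : Matrix (Fin N) (Fin 1) ℂ)
    (h1 : Ξ * Ω + Ωᴴ * Ξᴴ = η₁ * η₁ᴴ)
    (h2 : Ω + Ωᴴ = η₂ * η₂ᴴ) :
    starRingEnd ℂ ((η₁ᴴ * Ω⁻¹ * η₂) 0 0) * (1 - (η₁ᴴ * Ω⁻¹ * Ξ⁻¹ * η₁) 0 0)
      = -((η₂ᴴ * Ξᴴ * Ω⁻¹ * Ξ⁻¹ * η₁) 0 0) ∧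
    (1 - (η₁ᴴ * Ω⁻¹ * Ξ⁻¹ * η₁) 0 0)
      * starRingEnd ℂ (1 - (η₁ᴴ * Ω⁻¹ * Ξ⁻¹ * η₁) 0 0) = 1 := by
  have hΞd : IsUnit Ξ.det := (Matrix.isUnit_iff_isUnit_det Ξ).mp hΞ
  have hΩd : IsUnit Ω.det := (Matrix.isUnit_iff_isUnit_det Ω).mp hΩ
  have hΞi : Ξ * Ξ⁻¹ = 1 := Matrix.mul_nonsing_inv Ξ hΞd
  have hΞi' : Ξ⁻¹ * Ξ = 1 := Matrix.nonsing_inv_mul Ξ hΞd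
  have hΩi : Ω * Ω⁻¹ = 1 := Matrix.mul_nonsing_inv Ω hΩd
  have hΩi' : Ω⁻¹ * Ω = 1 := Matrix.nonsing_inv_mul Ω hΩd
  have hΩHi : Ω⁻¹ᴴ * Ωᴴ = 1 := by rw [← conjTranspose_mul, hΩi, conjTranspose_one]
  have hΩHi' : Ωᴴ * Ω⁻¹ᴴ = 1 := by rw [← conjTranspose_mul, hΩi', conjTranspose_one]
  have hΞHi : Ξ⁻¹ᴴ * Ξᴴ = 1 := by rw [← conjTranspose_mul, hΞi, conjTranspose_one]
  have hΞHi' : Ξᴴ * Ξ⁻¹ᴴ = 1 := by rw [← conjTranspose_mul, hΞi', conjTranspose_one]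
  have cΩ : ∀ X : Matrix (Fin N) (Fin 1) ℂ, Ω * (Ω⁻¹ * X) = X := fun X => by
    rw [← Matrix.mul_assoc, hΩi, Matrix.one_mul]
  have cΩ' : ∀ X : Matrix (Fin N) (Fin 1) ℂ, Ω⁻¹ * (Ω * X) = X := fun X => by
    rw [← Matrix.mul_assoc, hΩi', Matrix.one_mul]
  have cΞ : ∀ X : Matrix (Fin N) (Fin 1) ℂ, Ξ * (Ξ⁻¹ * X) = X := fun X => by
    rw [← Matrix.mul_assoc, hΞi, Matrix.one_mul]
  have cΞ' : ∀ X : Matrix (Fin N) (Fin 1) ℂ, Ξ⁻¹ * (Ξ * X) = X := fun X => by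
    rw [← Matrix.mul_assoc, hΞi', Matrix.one_mul]
  have cΩH : ∀ X : Matrix (Fin N) (Fin 1) ℂ, Ω⁻¹ᴴ * (Ωᴴ * X) = X := fun X => by
    rw [← Matrix.mul_assoc, hΩHi, Matrix.one_mul]
  have cΩH' : ∀ X : Matrix (Fin N) (Fin 1) ℂ, Ωᴴ * (Ω⁻¹ᴴ * X) = X := fun X => by
    rw [← Matrix.mul_assoc, hΩHi', Matrix.one_mul]
  have cΞH : ∀ X : Matrix (Fin N) (Fin 1) ℂ, Ξ⁻¹ᴴ * (Ξᴴ * X) = X := fun X => by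
    rw [← Matrix.mul_assoc, hΞHi, Matrix.one_mul]
  have cΞH' : ∀ X : Matrix (Fin N) (Fin 1) ℂ, Ξᴴ * (Ξ⁻¹ᴴ * X) = X := fun X => by
    rw [← Matrix.mul_assoc, hΞHi', Matrix.one_mul]
  -- key matrix identity 1
  have key1 : (η₂ᴴ * Ω⁻¹ᴴ * η₁) * (η₁ᴴ * Ω⁻¹ * Ξ⁻¹ * η₁)
      = η₂ᴴ * Ω⁻¹ᴴ * η₁ + η₂ᴴ * Ξᴴ * Ω⁻¹ * Ξ⁻¹ * η₁ := by
    have e1 : (η₂ᴴ * Ω⁻¹ᴴ * η₁) * (η₁ᴴ * Ω⁻¹ * Ξ⁻¹ * η₁)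
        = η₂ᴴ * (Ω⁻¹ᴴ * ((η₁ * η₁ᴴ) * (Ω⁻¹ * (Ξ⁻¹ * η₁)))) := by
      simp only [Matrix.mul_assoc]
    rw [e1, ← h1]
    simp only [Matrix.add_mul, Matrix.mul_add, Matrix.mul_assoc,
      cΩ, cΩ', cΞ, cΞ', cΩH, cΩH', cΞH, cΞH']
  -- key matrix identity 2
  have key2 : (η₁ᴴ * Ω⁻¹ * Ξ⁻¹ * η₁) * (η₁ᴴ * Ξ⁻¹ᴴ * Ω⁻¹ᴴ * η₁)
      = η₁ᴴ * Ξ⁻¹ᴴ * Ω⁻¹ᴴ * η₁ + η₁ᴴ * Ω⁻¹ * Ξ⁻¹ * η₁ := by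
    have e2 : (η₁ᴴ * Ω⁻¹ * Ξ⁻¹ * η₁) * (η₁ᴴ * Ξ⁻¹ᴴ * Ω⁻¹ᴴ * η₁)
        = η₁ᴴ * (Ω⁻¹ * (Ξ⁻¹ * ((η₁ * η₁ᴴ) * (Ξ⁻¹ᴴ * (Ω⁻¹ᴴ * η₁))))) := by
      simp only [Matrix.mul_assoc]
    rw [e2, ← h1]
    simp only [Matrix.add_mul, Matrix.mul_add, Matrix.mul_assoc,
      cΩ, cΩ', cΞ, cΞ', cΩH, cΩH', cΞH, cΞH']
  -- scalar extraction
  have emul : ∀ A B : Matrix (Fin 1) (Fin 1) ℂ, (A * B) 0 0 = A 0 0 * B 0 0 := by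
    intro A B; simp [Matrix.mul_apply]
  have hconjK : starRingEnd ℂ ((η₁ᴴ * Ω⁻¹ * η₂) 0 0) = (η₂ᴴ * Ω⁻¹ᴴ * η₁) 0 0 := by
    have h : η₂ᴴ * Ω⁻¹ᴴ * η₁ = (η₁ᴴ * Ω⁻¹ * η₂)ᴴ := by
      simp [Matrix.conjTranspose_mul, Matrix.mul_assoc]
    rw [h, Matrix.conjTranspose_apply]; rfl
  have hconja : starRingEnd ℂ ((η₁ᴴ * Ω⁻¹ * Ξ⁻¹ * η₁) 0 0)
      = (η₁ᴴ * Ξ⁻¹ᴴ * Ω⁻¹ᴴ * η₁) 0 0 := by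
    have h : η₁ᴴ * Ξ⁻¹ᴴ * Ω⁻¹ᴴ * η₁ = (η₁ᴴ * Ω⁻¹ * Ξ⁻¹ * η₁)ᴴ := by
      simp [Matrix.conjTranspose_mul, Matrix.mul_assoc]
    rw [h, Matrix.conjTranspose_apply]; rfl
  have k1 : (η₂ᴴ * Ω⁻¹ᴴ * η₁) 0 0 * (η₁ᴴ * Ω⁻¹ * Ξ⁻¹ * η₁) 0 0
      = (η₂ᴴ * Ω⁻¹ᴴ * η₁) 0 0 + (η₂ᴴ * Ξᴴ * Ω⁻¹ * Ξ⁻¹ * η₁) 0 0 := by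
    rw [← emul, key1]; simp [Matrix.add_apply]
  have k2 : (η₁ᴴ * Ω⁻¹ * Ξ⁻¹ * η₁) 0 0 * (η₁ᴴ * Ξ⁻¹ᴴ * Ω⁻¹ᴴ * η₁) 0 0
      = (η₁ᴴ * Ξ⁻¹ᴴ * Ω⁻¹ᴴ * η₁) 0 0 + (η₁ᴴ * Ω⁻¹ * Ξ⁻¹ * η₁) 0 0 := by
    rw [← emul, key2]; simp [Matrix.add_apply]
  constructor
  · rw [hconjK, mul_sub, mul_one, k1]; ring
  · rw [map_sub, RingHom.map_one, hconja]
    linear_combination k2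
end
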